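/- arXiv:1707.08049 — 4 statements merged into one kernel-verified Lean document; each statement's English description precedes it below -/
import Mathlib

section
/- The functor Cor_{Δ_F} : Δ_F^op → Fin_* preserves inert and active morphisms: if (α,φ) : ([n],g) → ([m],f) is inert in Δ_F then Cor(α,φ) is inert in Fin_*, and if (α,φ) is active then Cor(α,φ) is active. -/
/-! For an inert `(α, φ)` consecutive vertices `j - 1 < j` of `[n]` go to consecutive vertices
of `[m]`, so `y ∈ g(j)` has exactly one preimage: `φ_j(y) ∈ f(α(j))`. For an active `(α, φ)`
the intervals `(α(j - 1), α(j)]` cover `{1, …, m}`, so every `x ∈ f(i)` lies over some `j`, and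
surjectivity of `φ_j` provides a `y ∈ g(j)` with `f^{i, α(j)}(x) = φ_j(y)`. -/

/-- An object of Barwick's category `Δ_F`: a functor `[m] → F` from a finite linear order to
the skeleton `F` of finite sets, i.e. a chain of finite sets
`f(0) → f(1) → ⋯ → f(m)` (here the set `f(i)` is modelled as `Fin (a i)`). -/
structure DFObj where
  m : ℕ
  a : Fin (m + 1) → ℕ
  t : ∀ i j : Fin (m + 1), i ≤ j → Fin (a i) → Fin (a j)
  t_id : ∀ (i) (h : i ≤ i) (x), t i i h x = x
  t_comp : ∀ (i j k) (hij : i ≤ j) (hjk : j ≤ k) (x),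
    t j k hjk (t i j hij x) = t i k (hij.trans hjk) x

/-- A morphism `(α, φ) : ([n], g) → ([m], f)` in `Δ_F`: a morphism `α : [n] → [m]` in `Δ`
together with a natural transformation `φ : g → f ∘ α` such that each component `φ_k` is
injective and each naturality square is a pullback of finite sets. -/
structure DFHom (X Y : DFObj) where
  α : Fin (X.m + 1) →o Fin (Y.m + 1)
  φ : ∀ k : Fin (X.m + 1), Fin (X.a k) → Fin (Y.a (α k))
  inj : ∀ k, Function.Injective (φ k)
  nat : ∀ (k l : Fin (X.m + 1)) (h : k ≤ l) (x : Fin (X.a k)),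
    φ l (X.t k l h x) = Y.t (α k) (α l) (α.monotone h) (φ k x)
  isPullback : ∀ (k l : Fin (X.m + 1)) (h : k ≤ l) (x : Fin (X.a l))
    (y : Fin (Y.a (α k))), Y.t (α k) (α l) (α.monotone h) y = φ l x →
    ∃! z : Fin (X.a k), X.t k l h z = x ∧ φ k z = y

/-- A morphism in `Δ_F` is inert if the underlying map in `Δ` is an interval inclusion. -/
def DFHom.Inert {X Y : DFObj} (F : DFHom X Y) : Prop :=
  ∀ i : Fin (X.m + 1), (F.α i : ℕ) = (F.α 0 : ℕ) + (i : ℕ)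

/-- A morphism in `Δ_F` is active if the underlying map in `Δ` preserves the endpoints and
the morphism is Cartesian, i.e. `φ` is a natural isomorphism. -/
def DFHom.Active {X Y : DFObj} (F : DFHom X Y) : Prop :=
  F.α 0 = 0 ∧ F.α (Fin.last X.m) = Fin.last Y.m ∧ ∀ k, Function.Bijective (F.φ k)

lemma Option.existsUnique_of_existsUnique_some {α : Type*} {p : Option α → Prop}
    (hnone : ¬ p none) (h : ∃! a, p (some a)) : ∃! o, p o := by
  obtain ⟨a, ha, huniq⟩ := h
  refine ⟨some a, ha, ?_⟩
  rintro (_ | b) hb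
  · exact absurd hb hnone
  · rw [huniq b hb]

lemma Fin.exists_castSucc_lt_succ_le {α : Type*} [LinearOrder α] {n : ℕ} (f : Fin (n + 1) → α)
    {v : α} (h0 : f 0 < v) {k : Fin (n + 1)} (hk : v ≤ f k) :
    ∃ j : Fin n, f j.castSucc < v ∧ v ≤ f j.succ := by
  induction k using Fin.induction with
  | zero => exact absurd hk (not_le.2 h0)
  | succ j ih =>
    by_cases hv : v ≤ f j.castSucc
    · exact ih hv
    · exact ⟨j, not_le.1 hv, hk⟩

lemma DFObj.existsUnique_t_eq (Y : DFObj) {p : Fin (Y.m + 1)} (hp : p ≠ 0) (z : Fin (Y.a p)) :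
    ∃! c : (i : Fin Y.m) × Fin (Y.a i.succ), ∃ h : c.1.succ = p, Y.t c.1.succ p h.le c.2 = z := by
  obtain ⟨i, rfl⟩ := Fin.exists_succ_eq.2 hp
  refine ⟨⟨i, z⟩, ⟨rfl, Y.t_id _ _ _⟩, ?_⟩
  rintro ⟨i', x'⟩ ⟨hi, hx⟩
  obtain rfl : i' = i := Fin.succ_injective _ hi
  rw [Y.t_id] at hx
  exact congrArg _ hx

lemma DFHom.Inert.castSucc_lt_and_le_succ_iff {X Y : DFObj} {F : DFHom X Y} (hF : F.Inert)
    (j : Fin X.m) (v : Fin (Y.m + 1)) :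
    F.α j.castSucc < v ∧ v ≤ F.α j.succ ↔ v = F.α j.succ := by
  have hsucc := hF j.succ
  have hcast := hF j.castSucc
  simp only [Fin.val_succ, Fin.val_castSucc] at hsucc hcast
  simp only [Fin.lt_def, Fin.le_def, Fin.ext_iff]
  omega

lemma DFHom.Inert.succ_ne_zero {X Y : DFObj} {F : DFHom X Y} (hF : F.Inert) (j : Fin X.m) :
    F.α j.succ ≠ 0 :=
  ((Fin.zero_le _).trans_lt ((hF.castSucc_lt_and_le_succ_iff j _).2 rfl).1).ne'

theorem corDF_preserves_inert_active_general (X Y : DFObj) (F : DFHom X Y)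
    (Φ : Option ((i : Fin Y.m) × Fin (Y.a i.succ)) →
      Option ((j : Fin X.m) × Fin (X.a j.succ)))
    (hnone : Φ none = none)
    (hchar : ∀ (i : Fin Y.m) (x : Fin (Y.a i.succ)) (j : Fin X.m) (y : Fin (X.a j.succ)),
      Φ (some ⟨i, x⟩) = some ⟨j, y⟩ ↔
        ∃ h : F.α j.castSucc < i.succ ∧ i.succ ≤ F.α j.succ,
          Y.t i.succ (F.α j.succ) h.2 x = F.φ j.succ y) :
    (F.Inert → ∀ b : (j : Fin X.m) × Fin (X.a j.succ), ∃! c, Φ c = some b) ∧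
    (F.Active → ∀ c, Φ c = none → c = none) := by
  constructor
  · rintro hI ⟨j, y⟩
    have hfibre : ∀ c : (i : Fin Y.m) × Fin (Y.a i.succ), Φ (some c) = some ⟨j, y⟩ ↔
        ∃ h : c.1.succ = F.α j.succ, Y.t c.1.succ _ h.le c.2 = F.φ j.succ y := by
      rintro ⟨i, x⟩
      rw [hchar]
      exact ⟨fun ⟨h, hx⟩ => ⟨(hI.castSucc_lt_and_le_succ_iff j _).1 h, hx⟩,
        fun ⟨h, hx⟩ => ⟨(hI.castSucc_lt_and_le_succ_iff j _).2 h, hx⟩⟩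
    refine Option.existsUnique_of_existsUnique_some (by simp [hnone]) ?_
    exact (existsUnique_congr hfibre).2 (Y.existsUnique_t_eq (hI.succ_ne_zero j) _)
  · rintro ⟨h0, hlast, hbij⟩ (_ | ⟨i, x⟩) hc
    · rfl
    obtain ⟨j, hlt, hle⟩ := Fin.exists_castSucc_lt_succ_le F.α (h0 ▸ i.succ_pos)
      (hlast ▸ i.succ.le_last)
    obtain ⟨y, hy⟩ := (hbij j.succ).2 (Y.t i.succ _ hle x)
    simpa [hc] using (hchar i x j y).2 ⟨⟨hlt, hle⟩, hy.symm⟩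

/-- The functor `Cor_{Δ_F} : Δ_F^op → Fin₊` preserves inert and active morphisms.

Here `Cor` sends `([m], f)` to the pointed finite set `(⨿_{i=1}^m f(i))₊`, modelled as
`Option ((i : Fin m) × Fin (a i.succ))` with basepoint `none`, and sends `(α, φ)` to the map
`Φ` characterised by: `Φ` preserves the basepoint, and `Φ` sends `x ∈ f(i)` to `y ∈ g(j)`
precisely when `α(j-1) < i ≤ α(j)` and `f^{i, α(j)}(x) = φ_j(y)` (and to the basepoint when
no such `(j, y)` exists).  The conclusion: if `(α, φ)` is inert then every nonbasepoint
fibre of `Φ` is a singleton (`Φ` is inert in `Fin₊`), and if `(α, φ)` is active then only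
the basepoint is sent to the basepoint (`Φ` is active in `Fin₊`). -/
theorem corDF_preserves_inert_active (X Y : DFObj) (F : DFHom X Y)
    (Φ : Option ((i : Fin Y.m) × Fin (Y.a i.succ)) →
      Option ((j : Fin X.m) × Fin (X.a j.succ)))
    (hnone : Φ none = none)
    (hchar : ∀ (i : Fin Y.m) (x : Fin (Y.a i.succ)) (j : Fin X.m) (y : Fin (X.a j.succ)),
      Φ (some ⟨i, x⟩) = some ⟨j, y⟩ ↔
        ∃ h : F.α j.castSucc < i.succ ∧ i.succ ≤ F.α j.succ,
          Y.t i.succ (F.α j.succ) h.2 x = F.φ j.succ y)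
    (hbase : ∀ (i : Fin Y.m) (x : Fin (Y.a i.succ)),
      Φ (some ⟨i, x⟩) = none ↔
        ∀ (j : Fin X.m) (y : Fin (X.a j.succ)),
          ¬ ∃ h : F.α j.castSucc < i.succ ∧ i.succ ≤ F.α j.succ,
            Y.t i.succ (F.α j.succ) h.2 x = F.φ j.succ y) :
    (F.Inert → ∀ b : (j : Fin X.m) × Fin (X.a j.succ), ∃! c, Φ c = some b) ∧
    (F.Active → ∀ c, Φ c = none → c = none) :=
  corDF_preserves_inert_active_general X Y F Φ hnone hchar
end

section
/- Let p : E → B be a Cartesian fibration of categories, B' ⊆ B a full subcategory, and e an object of E. Let E'_{/e} be the category of objects of E lying over B' equipped with a map to e, and let E''_{/e} ⊆ E'_{/e} be the full subcategory of objects whose map to e is p-Cartesian. Then the inclusion E''_{/e} → E'_{/e} admits the property that for every object φ of E'_{/e}, the comma category E''_{/e} ×_{E'_{/e}} (E'_{/e})_{φ/} has an initial object (in particular it is connected/contractible), so the inclusion is cofinal. -/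
open CategoryTheory

universe v u

variable {E B : Type u} [Category.{v} E] [Category.{v} B]

/-- A morphism `f : x ⟶ y` in `E` is `p`-Cartesian if every `g : z ⟶ y` factors uniquely
through `f` over any given factorization of `p g` through `p f`. -/
def IsCartesianMor (p : E ⥤ B) {x y : E} (f : x ⟶ y) : Prop :=
  ∀ ⦃z : E⦄ (g : z ⟶ y) (u : p.obj z ⟶ p.obj x), u ≫ p.map f = p.map g →
    ∃! h : z ⟶ x, p.map h = u ∧ h ≫ f = g

/-- `p : E ⥤ B` is a Grothendieck (Cartesian) fibration: every morphism of `B` into the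
image of an object of `E` admits a Cartesian lift. -/
def IsGrothendieckFibration (p : E ⥤ B) : Prop :=
  ∀ (y : E) (b : B) (f : b ⟶ p.obj y),
    ∃ (x : E) (g : x ⟶ y) (hx : p.obj x = b),
      IsCartesianMor p g ∧ p.map g = eqToHom hx ≫ f

variable (p : E ⥤ B) (P : B → Prop) (e : E)

/-- The category `E'_{/e}` of objects of `E` lying over the full subcategory `B' ⊆ B`
(given by the predicate `P`) equipped with a map to `e`. -/
abbrev SlicePrime := ObjectProperty.FullSubcategory (fun ψ : Over e => P (p.obj ψ.left))

/-- The full subcategory `E''_{/e} ⊆ E'_{/e}` on those objects whose map to `e` is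
`p`-Cartesian. -/
abbrev SliceDoublePrime :=
  ObjectProperty.FullSubcategory (fun ψ : Over e => P (p.obj ψ.left) ∧ IsCartesianMor p ψ.hom)

/-- The inclusion `E''_{/e} → E'_{/e}`. -/
def sliceInclusion : SliceDoublePrime p P e ⥤ SlicePrime p P e where
  obj X := ⟨X.obj, X.property.1⟩
  map f := ObjectProperty.homMk f.hom

/-!
Factor `φ : x₀ ⟶ e` as `h ≫ g` with `h` lying over an identity and `g` Cartesian. Then `g` is
initial under `φ` among Cartesian maps to `e`: a map `k` from `φ` to a Cartesian `ψ` extends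
uniquely along `h`, because `ψ` is Cartesian and `p h` is invertible. A category with an initial
object is connected, so the inclusion is final.
-/

section Cartesian

variable {p}

theorem IsCartesianMor.hom_ext {x y z : E} {f : x ⟶ y} (hf : IsCartesianMor p f)
    {h₁ h₂ : z ⟶ x} (hp : p.map h₁ = p.map h₂) (w : h₁ ≫ f = h₂ ≫ f) : h₁ = h₂ := by
  obtain ⟨h, -, huniq⟩ := hf (h₂ ≫ f) (p.map h₂) (p.map_comp h₂ f).symm
  exact (huniq h₁ ⟨hp, w⟩).trans (huniq h₂ ⟨rfl, rfl⟩).symm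

theorem IsCartesianMor.existsUnique_of_isIso {x₀ x y e : E} {ψ : y ⟶ e}
    (hψ : IsCartesianMor p ψ) (h : x₀ ⟶ x) [IsIso (p.map h)] (g : x ⟶ e) (k : x₀ ⟶ y)
    (w : k ≫ ψ = h ≫ g) : ∃! m : x ⟶ y, h ≫ m = k ∧ m ≫ ψ = g := by
  obtain ⟨m, ⟨hpm, hmψ⟩, -⟩ := hψ g (inv (p.map h) ≫ p.map k) (by
    rw [Category.assoc, ← p.map_comp, w, p.map_comp, IsIso.inv_hom_id_assoc])
  refine ⟨m, ⟨hψ.hom_ext ?_ (by rw [Category.assoc, hmψ, w]), hmψ⟩, ?_⟩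
  · rw [p.map_comp, hpm, IsIso.hom_inv_id_assoc]
  · rintro m' ⟨hhm', hm'ψ⟩
    refine hψ.hom_ext ?_ (hm'ψ.trans hmψ.symm)
    rw [hpm, ← hhm', p.map_comp, IsIso.inv_hom_id_assoc]

theorem IsGrothendieckFibration.exists_factorization (hp : IsGrothendieckFibration p)
    {x₀ e : E} (φ : x₀ ⟶ e) :
    ∃ (x : E) (h : x₀ ⟶ x) (g : x ⟶ e) (hx : p.obj x₀ = p.obj x),
      IsCartesianMor p g ∧ p.map h = eqToHom hx ∧ h ≫ g = φ := by
  obtain ⟨x, g, hx, hg, hpg⟩ := hp e (p.obj x₀) (p.map φ)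
  obtain ⟨h, ⟨hph, hhg⟩, -⟩ := hg φ (eqToHom hx.symm) (by rw [hpg, eqToHom_trans_assoc]; simp)
  exact ⟨x, h, g, hx.symm, hg, hph, hhg⟩

end Cartesian

theorem CategoryTheory.StructuredArrow.nonempty_isInitial_of_existsUnique {C D : Type*}
    [Category C] [Category D] {S : D} {T : C ⥤ D} (f : StructuredArrow S T)
    (h : ∀ g : StructuredArrow S T, ∃! m : f.right ⟶ g.right, f.hom ≫ T.map m = g.hom) :
    Nonempty (Limits.IsInitial f) := by
  choose m hm huniq using h
  exact ⟨Limits.IsInitial.ofUniqueHom (fun g => homMk (m g) (hm g))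
    fun g η => ext _ _ (huniq g η.right (StructuredArrow.w η))⟩

theorem exists_isInitial_structuredArrow_sliceInclusion (hp : IsGrothendieckFibration p)
    (φ : SlicePrime p P e) :
    ∃ X : StructuredArrow φ (sliceInclusion p P e), Nonempty (Limits.IsInitial X) := by
  obtain ⟨x, h, g, hx, hg, hph, hφ⟩ := hp.exists_factorization φ.obj.hom
  have : IsIso (p.map h) := by rw [hph]; infer_instance
  let X : StructuredArrow φ (sliceInclusion p P e) := StructuredArrow.mk
    (Y := (⟨Over.mk g, hx ▸ φ.property, hg⟩ : SliceDoublePrime p P e))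
    (ObjectProperty.homMk (Over.homMk h hφ))
  refine ⟨X, X.nonempty_isInitial_of_existsUnique fun Y => ?_⟩
  obtain ⟨m, ⟨hhm, hmψ⟩, huniq⟩ := Y.right.property.2.existsUnique_of_isIso h g Y.hom.hom.left
    ((Over.w Y.hom.hom).trans hφ.symm)
  refine ⟨ObjectProperty.homMk (Over.homMk m hmψ), ?_, fun m' hm' => ?_⟩
  · exact ObjectProperty.hom_ext _ (Over.OverMorphism.ext hhm)
  · refine ObjectProperty.hom_ext _ (Over.OverMorphism.ext (huniq _ ⟨?_, Over.w m'.hom⟩))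
    exact congrArg (fun k => k.hom.left) hm'

/-- For a Cartesian fibration `p : E → B`, a full subcategory `B' ⊆ B` and an object
`e ∈ E`, the inclusion `E''_{/e} → E'_{/e}` of the Cartesian morphisms to `e` has the
property that for every object `φ` of `E'_{/e}` the comma category
`E''_{/e} ×_{E'_{/e}} (E'_{/e})_{φ/}` has an initial object (in particular it is
connected), so the inclusion is cofinal. -/
theorem sliceInclusion_comma_hasInitial_and_final
    (hp : IsGrothendieckFibration p) :
    (∀ φ : SlicePrime p P e,
      ∃ X : StructuredArrow φ (sliceInclusion p P e),
        Nonempty (Limits.IsInitial X)) ∧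
    (sliceInclusion p P e).Final := by
  have initial := exists_isInitial_structuredArrow_sliceInclusion p P e hp
  refine ⟨initial, ⟨fun φ => ?_⟩⟩
  obtain ⟨X, ⟨hX⟩⟩ := initial φ
  exact isConnected_of_isInitial _ hX
end

section
/- Suppose u : D ⇄ C : η is an adjunction (u left adjoint) with unit α : id → η∘u, and let E be the pullback of ev₁ : D^{Δ¹} → D along η : C → D, with projection G : E → D^{Δ¹}. Then the composite ev₀ ∘ G : E → D has a fully faithful left adjoint sending X ∈ D to the object (u(X), α_X : X → η u(X)). -/
open CategoryTheory

universe v₁ v₂ u₁ u₂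

variable {D : Type u₁} [Category.{v₁} D] {C : Type u₂} [Category.{v₂} C]

/-- Given an adjunction `u ⊣ η` with unit `α`, the functor `D → E` (where
`E = C ×_D D^{Δ¹}` is the category of triples `(c, d, f : d → η c)`) sending
`X` to `(u X, X, α_X : X → η (u X))`. -/
def unitTripleFunctor (u : D ⥤ C) (η : C ⥤ D) (adj : u ⊣ η) : D ⥤ Comma (𝟭 D) η where
  obj X := { left := X, right := u.obj X, hom := adj.unit.app X }
  map {X Y} f :=
    { left := f
      right := u.map f
      w := by simpa using adj.unit.naturality f }

/-!
A morphism `(X, u X, α_X) ⟶ (d, c, f)` is a pair `(g : X ⟶ d, h : u X ⟶ c)` with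
`α_X ≫ η h = g ≫ f`; the left side is the adjoint transpose of `h`, so `h` is forced to be the
transpose of `g ≫ f`. Hence such morphisms are the same as morphisms `X ⟶ d`, naturally, and the
unit of the resulting adjunction is the identity.
-/

namespace unitTripleFunctor

variable {u : D ⥤ C} {η : C ⥤ D} (adj : u ⊣ η)

lemma hom_ext {X : D} {Y : Comma (𝟭 D) η} {f₁ f₂ : (unitTripleFunctor u η adj).obj X ⟶ Y}
    (h : f₁.left = f₂.left) : f₁ = f₂ := by
  have transpose_right (f : (unitTripleFunctor u η adj).obj X ⟶ Y) :
      adj.homEquiv X Y.right f.right = f.left ≫ Y.hom := by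
    simpa [Adjunction.homEquiv_unit, unitTripleFunctor] using f.w.symm
  refine Comma.hom_ext _ _ h ((adj.homEquiv X Y.right).injective ?_)
  rw [transpose_right, transpose_right, h]

def homMk {X : D} {Y : Comma (𝟭 D) η} (g : X ⟶ Y.left) :
    (unitTripleFunctor u η adj).obj X ⟶ Y where
  left := g
  right := (adj.homEquiv X Y.right).symm (g ≫ Y.hom)
  w := by simp [unitTripleFunctor, ← Adjunction.homEquiv_unit]

def adjunction : unitTripleFunctor u η adj ⊣ Comma.fst (𝟭 D) η :=
  Adjunction.mkOfHomEquiv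
    { homEquiv X Y :=
        { toFun f := f.left
          invFun := homMk adj
          left_inv _ := hom_ext adj rfl
          right_inv _ := rfl }
      homEquiv_naturality_left_symm _ _ := hom_ext adj rfl }

lemma adjunction_unit_app (X : D) : (adjunction adj).unit.app X = 𝟙 X :=
  rfl

instance : IsIso (adjunction adj).unit :=
  have (X : D) : IsIso ((adjunction adj).unit.app X) := by
    rw [adjunction_unit_app]
    exact IsIso.id X
  NatIso.isIso_of_isIso_app _

end unitTripleFunctor

/-- Let `u : D ⇄ C : η` be an adjunction (`u` left adjoint) with unit
`α : id → η ∘ u`, and let `E` be the pullback of `ev₁ : D^{Δ¹} → D` along `η : C → D`,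
i.e. the category of triples `(c, d, f : d → η c)`, with `G : E → D^{Δ¹}` the projection.
Then the composite `ev₀ ∘ G : E → D`, `(c, d, f) ↦ d`, has a fully faithful left adjoint
sending `X` to `(u X, α_X : X → η (u X))`. -/
theorem unitTripleFunctor_fullyFaithful_leftAdjoint
    (u : D ⥤ C) (η : C ⥤ D) (adj : u ⊣ η) :
    Nonempty (unitTripleFunctor u η adj ⊣ Comma.fst (𝟭 D) η) ∧
    (unitTripleFunctor u η adj).Full ∧ (unitTripleFunctor u η adj).Faithful :=
  let fullyFaithful := (unitTripleFunctor.adjunction adj).fullyFaithfulLOfIsIsoUnit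
  ⟨⟨unitTripleFunctor.adjunction adj⟩, fullyFaithful.full, fullyFaithful.faithful⟩
end

section
/- A map of polynomial endofunctors between trees is injective: if f : X → Y is a morphism of polynomial endofunctors (commuting diagram with the middle square Cartesian) between trees X and Y, then f₀, f₁, f₂ are all injective functions. -/
/-- A tree, in the sense of Kock: a polynomial endofunctor
`E ←s− I −p→ V −t→ E` of finite sets with `t` injective, `s` injective with a single element
(the root) not in its image, and such that the successor function `σ`
(`σ(root) = root`, `σ(s i) = t (p i)`) reaches the root from every edge. -/
structure PolyTree : Type 1 where
  /-- edges (`T₀`) -/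
  E : Type
  /-- vertices (`T₁`) -/
  V : Type
  /-- pairs (vertex, incoming edge) (`T₂`) -/
  I : Type
  finE : Finite E
  finV : Finite V
  finI : Finite I
  s : I → E
  p : I → V
  t : V → E
  t_inj : Function.Injective t
  s_inj : Function.Injective s
  root : E
  root_not_mem : root ∉ Set.range s
  mem_of_ne_root : ∀ e, e ≠ root → e ∈ Set.range s
  σ : E → E
  σ_root : σ root = root
  σ_s : ∀ i, σ (s i) = t (p i)
  reaches_root : ∀ e, ∃ k, σ^[k] e = root

/-- A morphism of polynomial endofunctors between trees: a commuting diagram whose middle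
square is Cartesian. -/
structure PolyHom (X Y : PolyTree) where
  f₀ : X.E → Y.E
  f₁ : X.V → Y.V
  f₂ : X.I → Y.I
  comm_s : ∀ i, Y.s (f₂ i) = f₀ (X.s i)
  comm_p : ∀ i, Y.p (f₂ i) = f₁ (X.p i)
  comm_t : ∀ v, Y.t (f₁ v) = f₀ (X.t v)
  isPullback : ∀ (j : Y.I) (v : X.V), Y.p j = f₁ v → ∃! i : X.I, f₂ i = j ∧ X.p i = v
section Aux

variable {X Y : PolyTree} (f : PolyHom X Y)

/-- σ commutes with f₀ away from the root. -/
lemma polyAux_comm_σ {e : X.E} (he : e ≠ X.root) : Y.σ (f.f₀ e) = f.f₀ (X.σ e) := by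
  obtain ⟨i, rfl⟩ := X.mem_of_ne_root e he
  rw [← f.comm_s, Y.σ_s, f.comm_p, f.comm_t, X.σ_s]

lemma polyAux_ne_root {e : X.E} (he : e ≠ X.root) : f.f₀ e ≠ Y.root := by
  obtain ⟨i, rfl⟩ := X.mem_of_ne_root e he
  rw [← f.comm_s]
  intro h
  exact Y.root_not_mem ⟨f.f₂ i, h⟩

lemma polyAux_iterate_root (X : PolyTree) (n : ℕ) : X.σ^[n] X.root = X.root :=
  Function.iterate_fixed X.σ_root n

/-- Periodic edges are the root. -/
lemma polyAux_periodic (Y : PolyTree) {y : Y.E} {n : ℕ} (hn : 0 < n)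
    (h : Y.σ^[n] y = y) : y = Y.root := by
  obtain ⟨m, hm⟩ := Y.reaches_root y
  have hiter : ∀ k, Y.σ^[n * k] y = y := by
    intro k
    induction k with
    | zero => simp
    | succ k ih =>
      have : n * (k + 1) = n + n * k := by ring
      rw [this, Function.iterate_add_apply, ih, h]
  have h1 : Y.σ^[n * m] y = y := hiter m
  have h2 : Y.σ^[n * m] y = Y.root := by
    have hle : m ≤ n * m := Nat.le_mul_of_pos_left m hn
    have : n * m = (n * m - m) + m := by omega
    rw [this, Function.iterate_add_apply, hm, polyAux_iterate_root]
  rw [← h1, h2]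

/-- f₀ applied to the root has a unique preimage among edges mapping to it. -/
lemma polyAux_root_fiber {b : X.E} (hb : f.f₀ b = f.f₀ X.root) : b = X.root := by
  classical
  by_contra hbne
  set n := Nat.find (X.reaches_root b) with hn
  have hspec : X.σ^[n] b = X.root := Nat.find_spec (X.reaches_root b)
  have hmin : ∀ j < n, X.σ^[j] b ≠ X.root := fun j hj => Nat.find_min (X.reaches_root b) hj
  have hnpos : 0 < n := by
    rcases Nat.eq_zero_or_pos n with h0 | h; · exact absurd (by simpa [h0] using hspec) hbne
    · exact h
  -- Y.σ^[j] (f₀ b) = f₀ (X.σ^[j] b) for j ≤ n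
  have hcomm : ∀ j, j ≤ n → Y.σ^[j] (f.f₀ b) = f.f₀ (X.σ^[j] b) := by
    intro j hj
    induction j with
    | zero => simp
    | succ j ih =>
      have hjlt : j < n := hj
      rw [Function.iterate_succ_apply', Function.iterate_succ_apply',
        ih (le_of_lt hjlt), polyAux_comm_σ f (hmin j hjlt)]
  have hper : Y.σ^[n] (f.f₀ b) = f.f₀ b := by
    rw [hcomm n le_rfl, hspec, ← hb]
  exact polyAux_ne_root f hbne (polyAux_periodic Y hnpos hper)

lemma polyAux_key : ∀ n (a b : X.E), X.σ^[n] a = X.root → f.f₀ a = f.f₀ b → a = b := by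
  intro n
  induction n with
  | zero =>
    intro a b ha hf
    simp only [Function.iterate_zero, id] at ha
    subst ha
    exact (polyAux_root_fiber f hf.symm).symm
  | succ n ih =>
    intro a b ha hf
    by_cases haroot : a = X.root
    · subst haroot
      exact (polyAux_root_fiber f hf.symm).symm
    by_cases hbroot : b = X.root
    · subst hbroot
      exact absurd (polyAux_root_fiber f hf) haroot
    obtain ⟨i, hi⟩ := X.mem_of_ne_root a haroot
    obtain ⟨i', hi'⟩ := X.mem_of_ne_root b hbroot
    have hf2 : f.f₂ i = f.f₂ i' := by
      apply Y.s_inj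
      rw [f.comm_s, f.comm_s, hi, hi', hf]
    have hσ : X.σ a = X.σ b := by
      apply ih
      · rw [← Function.iterate_succ_apply, ha]
      · rw [← polyAux_comm_σ f haroot, ← polyAux_comm_σ f hbroot, hf]
    have hp : X.p i = X.p i' := by
      apply X.t_inj
      rw [← X.σ_s, ← X.σ_s, hi, hi', hσ]
    have hpb := f.isPullback (f.f₂ i) (X.p i) (f.comm_p i)
    obtain ⟨i₀, _, huniq⟩ := hpb
    have h1 : i = i₀ := huniq i ⟨rfl, rfl⟩
    have h2 : i' = i₀ := huniq i' ⟨hf2.symm, hp.symm⟩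
    rw [← hi, ← hi', h1, h2]

end Aux

/-- A morphism of polynomial endofunctors between trees is injective in all three components. -/
theorem polyHom_injective (X Y : PolyTree) (f : PolyHom X Y) :
    Function.Injective f.f₀ ∧ Function.Injective f.f₁ ∧ Function.Injective f.f₂ := by
  have h0 : Function.Injective f.f₀ := by
    intro a b hab
    obtain ⟨n, hn⟩ := X.reaches_root a
    exact polyAux_key f n a b hn hab
  refine ⟨h0, ?_, ?_⟩
  · intro v v' h
    apply X.t_inj
    apply h0
    rw [← f.comm_t, ← f.comm_t, h]
  · intro i i' h
    apply X.s_inj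
    apply h0
    rw [← f.comm_s, ← f.comm_s, h]
end
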